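/- For any n ≥ 9 there exists a tree T with n pendent vertices in which each stem vertex has degree 4 or 5, each stem vertex is incident to exactly one internal vertex, and every non-stem internal vertex has degree 3; any such tree satisfies M_2(T) = 11n - 27. -/

import Mathlib

/-!
Let `T` be such a tree with `n ≥ 9` leaves. Two adjacent leaves, or two adjacent stems, would
make `T` the double star on these two vertices, which has at most `8` leaves. Hence leaves hang
from stems, stems are pairwise non-adjacent, and the unique internal neighbour of a stem is cubic.
So an edge avoiding all stems joins two cubic vertices and has weight `9`, while the `d` edges at
a stem of degree `d ∈ {4, 5}` have total weight `d (d - 1) + 3 d = 9 d + 2 d - 20`, as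
`d² = 9 d - 20`. If there are `k` stems with degree sum `D`, then `n = D - k`, the handshake lemma
and `|E| = |V| - 1` give `|E| = n + 2 k - 3`, and `M₂ = 9 |E| + 2 D - 20 k = 11 n - 27`.

For existence write `n = 3 (c + 2) + b` with `1 ≤ c` and `b ≤ c + 2`. A tree with `c` cubic
vertices and no others of degree `≥ 2` has `c + 2` leaves; these become the stems, each receiving
three pendent vertices and `b` of them a fourth.
-/

open scoped Classical

open Finset

namespace SimpleGraph

variable {V : Type*}

def secondZagrebIndex [Fintype V] [DecidableEq V] (G : SimpleGraph V) [DecidableRel G.Adj] : ℤ :=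
  ∑ e ∈ G.edgeFinset,
    Sym2.lift ⟨fun u v => (G.degree u : ℤ) * G.degree v, fun _ _ => mul_comm _ _⟩ e

structure IsStemTree [Fintype V] (G : SimpleGraph V) [DecidableRel G.Adj] : Prop where
  isTree : G.IsTree
  stem : ∀ v, 2 ≤ G.degree v → (∃ u, G.Adj v u ∧ G.degree u = 1) →
    (G.degree v = 4 ∨ G.degree v = 5) ∧ #{u | G.Adj v u ∧ 2 ≤ G.degree u} = 1
  nonstem : ∀ v, 2 ≤ G.degree v → ¬(∃ u, G.Adj v u ∧ G.degree u = 1) → G.degree v = 3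

variable {G : SimpleGraph V}

theorem Preconnected.mem_of_forall_adj_mem (hG : G.Preconnected) {s : Set V}
    (hs : ∀ x ∈ s, ∀ y, G.Adj x y → y ∈ s) {a : V} (ha : a ∈ s) (v : V) : v ∈ s := by
  obtain ⟨w⟩ := hG a v
  induction w with
  | nil => exact ha
  | cons h _ ih => exact ih (hs _ ha _ h)

variable [Fintype V] [DecidableRel G.Adj]

theorem IsStemTree.one_le_degree (h : G.IsStemTree)
    (hn : 9 ≤ #{v | G.degree v = 1}) (v : V) : 1 ≤ G.degree v := by
  have : Nontrivial V := Fintype.one_lt_card_iff_nontrivial.mp <| by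
    have := card_filter_le univ fun v => G.degree v = 1
    rw [card_univ] at this
    omega
  exact h.isTree.connected.preconnected.degree_pos_of_nontrivial v

variable [DecidableEq V]

theorem Preconnected.card_le_degree_add_degree (hG : G.Preconnected) {u v : V} (huv : G.Adj u v)
    (hu : ∀ w, G.Adj u w → w ≠ v → G.degree w = 1)
    (hv : ∀ w, G.Adj v w → w ≠ u → G.degree w = 1) :
    Fintype.card V ≤ G.degree u + G.degree v := by
  have hunique {x y z : V} (hx : G.degree x = 1) (hy : G.Adj x y) (hz : G.Adj x z) : y = z :=
    (degree_eq_one_iff_existsUnique_adj.mp hx).unique hy hz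
  have hcover : ∀ x, x ∈ G.neighborFinset u ∪ G.neighborFinset v := by
    refine hG.mem_of_forall_adj_mem (s := {x | x ∈ G.neighborFinset u ∪ G.neighborFinset v})
      ?_ (a := v) (by simp [huv])
    simp only [Set.mem_ofPred_eq, mem_union, mem_neighborFinset]
    rintro x (hx | hx) y hxy
    · by_cases hxv : x = v
      · exact .inr (hxv ▸ hxy)
      · exact .inr (hunique (hu x hx hxv) hxy hx.symm ▸ huv.symm)
    · by_cases hxu : x = u
      · exact .inl (hxu ▸ hxy)
      · exact .inl (hunique (hv x hx hxu) hxy hx.symm ▸ huv)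
  calc Fintype.card V = #(G.neighborFinset u ∪ G.neighborFinset v) :=
        (congrArg card (eq_univ_of_forall hcover)).symm
    _ ≤ G.degree u + G.degree v := by
        have := card_union_le (G.neighborFinset u) (G.neighborFinset v)
        rw [card_neighborFinset_eq_degree, card_neighborFinset_eq_degree] at this
        exact this

theorem sum_edgeFinset_eq_sum_sum_neighborFinset {M : Type*} [AddCommMonoid M] {S : Finset V}
    (hS : ∀ u ∈ S, ∀ v ∈ S, ¬G.Adj u v) (g : Sym2 V → M)
    (hg : ∀ e ∈ G.edgeFinset, (∀ v ∈ e, v ∉ S) → g e = 0) :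
    ∑ e ∈ G.edgeFinset, g e = ∑ s ∈ S, ∑ u ∈ G.neighborFinset s, g s(s, u) := by
  rw [sum_sigma']
  symm
  refine sum_bij_ne_zero (fun x _ _ => s(x.1, x.2)) ?_ ?_ ?_ (fun _ _ _ => rfl)
  · rintro ⟨s, u⟩ hx _
    simpa using (mem_sigma.mp hx).2
  · rintro ⟨s, u⟩ hx _ ⟨t, w⟩ hy _ h
    simp only [mem_sigma, mem_neighborFinset] at hx hy
    rcases Sym2.eq_iff.mp h with ⟨rfl, rfl⟩ | ⟨rfl, rfl⟩
    · rfl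
    · exact absurd hx.2 (hS _ hx.1 _ hy.1)
  · intro e he hne
    induction e with
    | _ a b =>
    rw [mem_edgeFinset, mem_edgeSet] at he
    by_cases ha : a ∈ S
    · exact ⟨⟨a, b⟩, by simpa [ha] using he, hne, rfl⟩
    by_cases hb : b ∈ S
    · exact ⟨⟨b, a⟩, by simpa [hb] using he.symm, by rwa [Sym2.eq_swap], Sym2.eq_swap⟩
    · exact absurd (hg _ (by simpa using he) (by simp [ha, hb])) hne

namespace IsStemTree

variable (h : G.IsStemTree) (hn : 9 ≤ #{v | G.degree v = 1})
include h hn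

theorem not_adj_of_degree_eq_one {u v : V} (hu : G.degree u = 1) (hv : G.degree v = 1) :
    ¬G.Adj u v := by
  intro huv
  have hunique (x y : V) (hx : G.degree x = 1) (hxy : G.Adj x y) (w : V) (hw : G.Adj x w)
      (hwy : w ≠ y) : G.degree w = 1 :=
    absurd ((degree_eq_one_iff_existsUnique_adj.mp hx).unique hw hxy) hwy
  have := h.isTree.connected.preconnected.card_le_degree_add_degree huv
    (hunique u v hu huv) (hunique v u hv huv.symm)
  have := card_filter_le univ fun v => G.degree v = 1
  rw [card_univ] at this
  omega

theorem exists_adj_degree_eq_one_iff (v : V) :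
    (∃ u, G.Adj v u ∧ G.degree u = 1) ↔ G.degree v = 4 ∨ G.degree v = 5 := by
  constructor
  · rintro ⟨u, hvu, hu⟩
    have hv : G.degree v ≠ 1 := fun hv => h.not_adj_of_degree_eq_one hn hv hu hvu
    exact (h.stem v (by have := h.one_le_degree hn v; omega) ⟨u, hvu, hu⟩).1
  · intro hv
    by_contra hleaf
    have := h.nonstem v (by omega) hleaf
    omega

theorem degree_cases (v : V) :
    G.degree v = 1 ∨ (G.degree v = 4 ∨ G.degree v = 5) ∨ G.degree v = 3 := by
  by_cases hleaf : ∃ u, G.Adj v u ∧ G.degree u = 1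
  · exact .inr (.inl ((h.exists_adj_degree_eq_one_iff hn v).mp hleaf))
  · have := h.one_le_degree hn v
    by_cases hv : G.degree v = 1
    · exact .inl hv
    · exact .inr (.inr (h.nonstem v (by omega) hleaf))

theorem card_filter_adj_two_le_degree {v : V} (hv : G.degree v = 4 ∨ G.degree v = 5) :
    #{u | G.Adj v u ∧ 2 ≤ G.degree u} = 1 :=
  (h.stem v (by omega) ((h.exists_adj_degree_eq_one_iff hn v).mpr hv)).2

theorem card_filter_adj_degree_eq_one {v : V} (hv : G.degree v = 4 ∨ G.degree v = 5) :
    #{u | G.Adj v u ∧ G.degree u = 1} = G.degree v - 1 := by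
  have hsplit := card_filter_add_card_filter_not (s := G.neighborFinset v)
    fun u => G.degree u = 1
  rw [card_neighborFinset_eq_degree, neighborFinset_eq_filter, filter_filter, filter_filter]
    at hsplit
  have hnonleaf : #{u | G.Adj v u ∧ ¬G.degree u = 1} = 1 := by
    refine .trans (congrArg card <| filter_congr fun u _ => ?_)
      (h.card_filter_adj_two_le_degree hn hv)
    exact and_congr_right fun _ => by have := h.one_le_degree hn u; omega
  omega

theorem not_adj_of_stem {u v : V} (hu : G.degree u = 4 ∨ G.degree u = 5)
    (hv : G.degree v = 4 ∨ G.degree v = 5) : ¬G.Adj u v := by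
  intro huv
  have honly {x y : V} (hx : G.degree x = 4 ∨ G.degree x = 5) (hxy : G.Adj x y)
      (hy2 : 2 ≤ G.degree y) (w : V) (hw : G.Adj x w) (hwy : w ≠ y) : G.degree w = 1 := by
    by_contra hw1
    have hw2 : 2 ≤ G.degree w := by have := h.one_le_degree hn w; omega
    exact hwy (card_le_one.mp (h.card_filter_adj_two_le_degree hn hx).le w (by simp [hw, hw2])
      y (by simp [hxy, hy2]))
  have hcard := h.isTree.connected.preconnected.card_le_degree_add_degree huv
    (honly hu huv (by omega)) (honly hv huv.symm (by omega))
  have hleaves : #{w | G.degree w = 1} ≤ #((univ.erase u).erase v) :=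
    card_le_card fun w hw => by
      simp only [mem_filter, mem_univ, true_and] at hw
      simp only [mem_erase, mem_univ, and_true]
      constructor <;> rintro rfl <;> omega
  rw [card_erase_of_mem (by simp [huv.ne.symm]), card_erase_of_mem (mem_univ _), card_univ]
    at hleaves
  omega

theorem degree_eq_three_of_adj_stem {v w : V} (hv : G.degree v = 4 ∨ G.degree v = 5)
    (hvw : G.Adj v w) (hw : 2 ≤ G.degree w) : G.degree w = 3 := by
  rcases h.degree_cases hn w with hw' | hw' | hw'
  · omega
  · exact absurd hvw (h.not_adj_of_stem hn hv hw')
  · exact hw'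

theorem degree_eq_three_of_adj_of_not_stem {v w : V} (hvw : G.Adj v w)
    (hv : ¬(G.degree v = 4 ∨ G.degree v = 5)) (hw : ¬(G.degree w = 4 ∨ G.degree w = 5)) :
    G.degree v = 3 := by
  rcases h.degree_cases hn v with hv' | hv' | hv'
  · exact absurd ((h.exists_adj_degree_eq_one_iff hn w).mp ⟨v, hvw.symm, hv'⟩) hw
  · exact absurd hv' hv
  · exact hv'

theorem sum_degree_neighborFinset {v : V} (hv : G.degree v = 4 ∨ G.degree v = 5) :
    ∑ u ∈ G.neighborFinset v, (G.degree u : ℤ) = G.degree v + 2 := by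
  obtain ⟨w, hw⟩ := card_eq_one.mp (h.card_filter_adj_two_le_degree hn hv)
  have hmem (u : V) : G.Adj v u ∧ 2 ≤ G.degree u ↔ u = w := by
    simpa using congrArg (u ∈ ·) hw
  have hvw := ((hmem w).mpr rfl)
  have hexcess : ∑ u ∈ G.neighborFinset v, ((G.degree u : ℤ) - 1) = 2 := by
    rw [sum_eq_single_of_mem w (by simpa using hvw.1) fun u hu huw => ?_]
    · rw [h.degree_eq_three_of_adj_stem hn hv hvw.1 hvw.2]
      norm_num
    · have hu1 := h.one_le_degree hn u
      have : ¬2 ≤ G.degree u := fun hu2 => huw ((hmem u).mp ⟨by simpa using hu, hu2⟩)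
      omega
  calc ∑ u ∈ G.neighborFinset v, (G.degree u : ℤ)
      = ∑ u ∈ G.neighborFinset v, (1 + ((G.degree u : ℤ) - 1)) := by simp
    _ = G.degree v + 2 := by
      rw [sum_add_distrib, hexcess, sum_const, card_neighborFinset_eq_degree, nsmul_one]

theorem card_leaves_eq_sum :
    (#{v | G.degree v = 1} : ℤ) =
      ∑ s ∈ {v | G.degree v = 4 ∨ G.degree v = 5}, ((G.degree s : ℤ) - 1) := by
  have hdc := sum_card_bipartiteAbove_eq_sum_card_bipartiteBelow
    (s := {v | G.degree v = 1}) (t := {v | G.degree v = 4 ∨ G.degree v = 5}) (r := G.Adj)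
  have habove (l : V) (hl : l ∈ ({v | G.degree v = 1} : Finset V)) :
      #(bipartiteAbove G.Adj {v | G.degree v = 4 ∨ G.degree v = 5} l) = 1 := by
    rw [mem_filter] at hl
    rw [← hl.2, ← card_neighborFinset_eq_degree]
    congr 1
    ext u
    simp only [mem_bipartiteAbove, mem_filter, mem_univ, true_and, mem_neighborFinset,
      and_iff_right_iff_imp]
    exact fun hlu => (h.exists_adj_degree_eq_one_iff hn u).mp ⟨l, hlu.symm, hl.2⟩
  have hbelow (s : V) (hs : s ∈ ({v | G.degree v = 4 ∨ G.degree v = 5} : Finset V)) :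
      #(bipartiteBelow G.Adj {v | G.degree v = 1} s) = G.degree s - 1 := by
    rw [← h.card_filter_adj_degree_eq_one hn (mem_filter.mp hs).2]
    congr 1
    ext u
    simp [adj_comm, and_comm]
  rw [sum_congr rfl habove, sum_congr rfl hbelow, sum_const, smul_eq_mul, mul_one] at hdc
  rw [hdc, Nat.cast_sum]
  refine sum_congr rfl fun s hs => ?_
  have := (mem_filter.mp hs).2
  rw [Nat.cast_sub (by omega), Nat.cast_one]

theorem secondZagrebIndex_eq_sum :
    G.secondZagrebIndex = 9 * #G.edgeFinset +
      ∑ s ∈ {v | G.degree v = 4 ∨ G.degree v = 5}, (2 * (G.degree s : ℤ) - 20) := by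
  set S : Finset V := {v | G.degree v = 4 ∨ G.degree v = 5}
  have hindep : ∀ u ∈ S, ∀ v ∈ S, ¬G.Adj u v :=
    fun u hu v hv => h.not_adj_of_stem hn (mem_filter.mp hu).2 (mem_filter.mp hv).2
  let P : Sym2 V → ℤ :=
    Sym2.lift ⟨fun u v => (G.degree u : ℤ) * G.degree v, fun _ _ => mul_comm _ _⟩
  have hcubic : ∀ e ∈ G.edgeFinset, (∀ v ∈ e, v ∉ S) → P e - 9 = 0 := by
    intro e he hnot
    induction e with
    | _ a b =>
    rw [mem_edgeFinset, mem_edgeSet] at he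
    simp only [S, Sym2.mem_iff, mem_filter, mem_univ, true_and, forall_eq_or_imp, forall_eq]
      at hnot
    simp only [P, Sym2.lift_mk, h.degree_eq_three_of_adj_of_not_stem hn he hnot.1 hnot.2,
      h.degree_eq_three_of_adj_of_not_stem hn he.symm hnot.2 hnot.1]
    norm_num
  have hstem (s : V) (hs : s ∈ S) :
      ∑ u ∈ G.neighborFinset s, (P s(s, u) - 9) = 2 * (G.degree s : ℤ) - 20 := by
    have hs' := (mem_filter.mp hs).2
    simp only [P, Sym2.lift_mk]
    rw [sum_sub_distrib, ← mul_sum, h.sum_degree_neighborFinset hn hs', sum_const,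
      card_neighborFinset_eq_degree, nsmul_eq_mul]
    rcases hs' with hs' | hs' <;> rw [hs'] <;> norm_num
  calc G.secondZagrebIndex = ∑ e ∈ G.edgeFinset, (P e - 9) + 9 * #G.edgeFinset := by
        rw [sum_sub_distrib, sum_const, nsmul_eq_mul]
        unfold secondZagrebIndex
        ring
    _ = _ := by
        rw [sum_edgeFinset_eq_sum_sum_neighborFinset hindep _ hcubic, sum_congr rfl hstem,
          add_comm]

theorem secondZagrebIndex_eq : G.secondZagrebIndex = 11 * #{v | G.degree v = 1} - 27 := by
  set L : Finset V := {v | G.degree v = 1}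
  set S : Finset V := {v | G.degree v = 4 ∨ G.degree v = 5}
  set C : Finset V := {v | G.degree v = 3}
  have hpart (f : V → ℤ) :
      ∑ v, f v = ∑ v ∈ L, f v + ∑ v ∈ S, f v + ∑ v ∈ C, f v := by
    simp only [L, S, C, sum_filter, ← sum_add_distrib]
    refine sum_congr rfl fun v _ => ?_
    have := h.degree_cases hn v
    split_ifs <;> omega
  have hcard : (Fintype.card V : ℤ) = #L + #S + #C := by
    simpa using hpart 1
  have hdegree : ∑ v, (G.degree v : ℤ) = #L + ∑ s ∈ S, (G.degree s : ℤ) + 3 * #C := by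
    have hleaves : ∑ v ∈ L, (G.degree v : ℤ) = #L := by
      rw [sum_congr rfl fun v hv => congrArg Nat.cast (mem_filter.mp hv).2, sum_const,
        Nat.cast_one, nsmul_one]
    have hcubic : ∑ v ∈ C, (G.degree v : ℤ) = 3 * #C := by
      rw [sum_congr rfl fun v hv => congrArg Nat.cast (mem_filter.mp hv).2, sum_const,
        nsmul_eq_mul, mul_comm]
      rfl
    rw [hpart, hleaves, hcubic]
  have hhandshake : ∑ v, (G.degree v : ℤ) = 2 * #G.edgeFinset := by
    exact_mod_cast G.sum_degrees_eq_twice_card_edges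
  have htree : (#G.edgeFinset : ℤ) + 1 = Fintype.card V := by
    exact_mod_cast h.isTree.card_edgeFinset
  have hM := h.secondZagrebIndex_eq_sum hn
  have hL := h.card_leaves_eq_sum hn
  rw [sum_sub_distrib, ← mul_sum, sum_const, nsmul_eq_mul] at hM
  rw [sum_sub_distrib, sum_const, nsmul_eq_mul, mul_one] at hL
  linarith

end IsStemTree

section ParentGraph

def parentGraph (m : ℕ) (p : ℕ → ℕ) : SimpleGraph (Fin m) :=
  fromRel fun x y => 0 < (x : ℕ) ∧ p x = y

variable {m : ℕ} {p : ℕ → ℕ} (hp : ∀ v, 0 < v → p v < v)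
include hp

theorem parentGraph_adj {x y : Fin m} :
    (parentGraph m p).Adj x y ↔ (0 < (x : ℕ) ∧ p x = y) ∨ (0 < (y : ℕ) ∧ p y = x) := by
  rw [parentGraph, fromRel_adj]
  refine ⟨And.right, fun hxy => ⟨?_, hxy⟩⟩
  rintro rfl
  rcases hxy with ⟨hx, hpx⟩ | ⟨hx, hpx⟩ <;> exact (hp _ hx).ne hpx

theorem parentGraph_reachable_zero (hm : 0 < m) (x : Fin m) :
    (parentGraph m p).Reachable x ⟨0, hm⟩ := by
  obtain ⟨k, hk⟩ := x
  induction k using Nat.strong_induction_on with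
  | _ k ih =>
  rcases Nat.eq_zero_or_pos k with rfl | hk0
  · rfl
  · have hpk := hp k hk0
    have hadj : (parentGraph m p).Adj ⟨k, hk⟩ ⟨p k, hpk.trans hk⟩ :=
      (parentGraph_adj hp).mpr (.inl ⟨hk0, rfl⟩)
    exact hadj.reachable.trans (ih _ hpk _)

theorem card_edgeFinset_parentGraph :
    #(parentGraph m p).edgeFinset = #{x : Fin m | 0 < (x : ℕ)} := by
  symm
  refine card_bij (fun x hx => s(x, ⟨p x, (hp x (mem_filter.mp hx).2).trans x.2⟩)) ?_ ?_ ?_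
  · intro x hx
    rw [mem_edgeFinset, mem_edgeSet, parentGraph_adj hp]
    exact .inl ⟨(mem_filter.mp hx).2, rfl⟩
  · intro x hx y hy hxy
    rcases Sym2.eq_iff.mp hxy with ⟨hxy, _⟩ | ⟨hxy, hyx⟩
    · exact hxy
    · have := hp x (mem_filter.mp hx).2
      have := hp y (mem_filter.mp hy).2
      rw [Fin.ext_iff] at hxy hyx
      simp only at hxy hyx
      omega
  · intro e he
    induction e with
    | _ x y =>
    rw [mem_edgeFinset, mem_edgeSet, parentGraph_adj hp] at he
    rcases he with ⟨hx, hxy⟩ | ⟨hy, hyx⟩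
    · refine ⟨x, by simpa using hx, ?_⟩
      congr 1
      exact Fin.ext hxy
    · refine ⟨y, by simpa using hy, ?_⟩
      rw [Sym2.eq_swap]
      congr 1
      exact Fin.ext hyx

theorem parentGraph_isTree (hm : 0 < m) : (parentGraph m p).IsTree := by
  have : Nonempty (Fin m) := ⟨⟨0, hm⟩⟩
  rw [isTree_iff_connected_and_card]
  refine ⟨⟨fun x y => (parentGraph_reachable_zero hp hm x).trans
    (parentGraph_reachable_zero hp hm y).symm⟩, ?_⟩
  rw [Nat.card_eq_fintype_card, ← edgeFinset_card, card_edgeFinset_parentGraph hp,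
    Nat.card_eq_fintype_card, Fintype.card_fin]
  have := card_filter_add_card_filter_not (s := (univ : Finset (Fin m))) fun x => (x : ℕ) < 1
  rw [Fin.card_filter_val_lt, card_univ, Fintype.card_fin] at this
  simp only [not_lt, Nat.one_le_iff_ne_zero, ← Nat.pos_iff_ne_zero] at this
  omega

theorem parentGraph_degree (x : Fin m) :
    (parentGraph m p).degree x =
      #{y : Fin m | 0 < (y : ℕ) ∧ p y = x} + if 0 < (x : ℕ) then 1 else 0 := by
  have hsplit : (parentGraph m p).neighborFinset x =
      ({y | 0 < (y : ℕ) ∧ p y = x} : Finset (Fin m)) ∪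
        ({y | 0 < (x : ℕ) ∧ p x = y} : Finset (Fin m)) := by
    ext y
    simp only [mem_neighborFinset, mem_filter, mem_univ, true_and, mem_union, parentGraph_adj hp]
    tauto
  rw [← card_neighborFinset_eq_degree, hsplit, card_union_of_disjoint]
  · congr 1
    split_ifs with hx
    · refine card_eq_one.mpr ⟨⟨p x, (hp x hx).trans x.2⟩, ?_⟩
      ext y
      simp [hx, Fin.ext_iff, eq_comm]
    · simp [hx]
  · rw [disjoint_filter]
    rintro y - ⟨hy, hyx⟩ ⟨hx, hxy⟩
    have := hp _ hy
    have := hp _ hx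
    omega

end ParentGraph

end SimpleGraph

open SimpleGraph

theorem Fin.card_filter_univ_eq_card_filter_Iio (m : ℕ) (P : ℕ → Prop) [DecidablePred P] :
    #{x : Fin m | P x} = #{v ∈ Iio m | P v} := by
  rw [← Fin.map_valEmbedding_univ, filter_map, card_map]
  rfl

/-- The parent map of `stemTree c b`, whose vertices `0, …, c - 1` are cubic, `c, …, 2c + 1` are
the stems and the others are leaves. Below `2c + 2` the parent of `v` is `(v - 2) / 2`: a binary
tree in which the root `0` has the extra child `1`. Stem `c + j` is the parent of the leaves
`2c + 2 + 3j`, `2c + 3 + 3j`, `2c + 4 + 3j` and, when `j < b`, of `5c + 8 + j`. -/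
def stemParent (c v : ℕ) : ℕ :=
  if v < 2 * c + 2 then (v - 2) / 2
  else if v < 5 * c + 8 then c + (v - (2 * c + 2)) / 3
  else v - (4 * c + 8)

theorem stemParent_lt {c v : ℕ} (hv : 0 < v) : stemParent c v < v := by
  unfold stemParent
  split_ifs <;> omega

theorem card_stemParent_preimage {c b : ℕ} (hc : 1 ≤ c) (hb : b ≤ c + 2) (u : ℕ) :
    #{v ∈ Iio (5 * c + 8 + b) | 0 < v ∧ stemParent c v = u} =
      if u = 0 then 3 else if u < c then 2
      else if u < 2 * c + 2 then (if u < c + b then 4 else 3) else 0 := by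
  have hext {s : Finset ℕ}
      (hs : ∀ v, v ∈ s ↔ v < 5 * c + 8 + b ∧ 0 < v ∧ stemParent c v = u) :
      {v ∈ Iio (5 * c + 8 + b) | 0 < v ∧ stemParent c v = u} = s := by
    ext v
    simp [hs]
  split_ifs with h0 h1 h2 h3
  · rw [hext (s := {1, 2, 3}) fun v => by
      simp only [mem_insert, mem_singleton]; unfold stemParent; split_ifs <;> omega]
    rfl
  · rw [hext (s := {2 * u + 2, 2 * u + 3}) fun v => by
      simp only [mem_insert, mem_singleton]; unfold stemParent; split_ifs <;> omega]
    exact card_pair (by omega)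
  · rw [hext (s := {2 * c + 2 + 3 * (u - c), 2 * c + 3 + 3 * (u - c), 2 * c + 4 + 3 * (u - c),
      u + 4 * c + 8}) fun v => by
      simp only [mem_insert, mem_singleton]; unfold stemParent; split_ifs <;> omega]
    rw [card_insert_of_notMem (by simp only [mem_insert, mem_singleton]; omega),
      card_insert_of_notMem (by simp only [mem_insert, mem_singleton]; omega), card_pair (by omega)]
  · rw [hext (s := {2 * c + 2 + 3 * (u - c), 2 * c + 3 + 3 * (u - c), 2 * c + 4 + 3 * (u - c)})
      fun v => by simp only [mem_insert, mem_singleton]; unfold stemParent; split_ifs <;> omega]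
    rw [card_insert_of_notMem (by simp only [mem_insert, mem_singleton]; omega),
      card_pair (by omega)]
  · rw [hext (s := ∅) fun v => by
      simp only [notMem_empty, false_iff]; unfold stemParent; split_ifs <;> omega]
    rfl

def stemTree (c b : ℕ) : SimpleGraph (Fin (5 * c + 8 + b)) := parentGraph _ (stemParent c)

section StemTree

variable {c b : ℕ}

theorem stemTree_adj {x y : Fin (5 * c + 8 + b)} :
    (stemTree c b).Adj x y ↔
      (0 < (x : ℕ) ∧ stemParent c x = y) ∨ (0 < (y : ℕ) ∧ stemParent c y = x) :=
  parentGraph_adj fun _ => stemParent_lt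

theorem stemTree_degree (hc : 1 ≤ c) (hb : b ≤ c + 2) (x : Fin (5 * c + 8 + b)) :
    (stemTree c b).degree x =
      if (x : ℕ) < c then 3
      else if (x : ℕ) < 2 * c + 2 then (if (x : ℕ) < c + b then 5 else 4)
      else 1 := by
  rw [stemTree, parentGraph_degree (fun _ => stemParent_lt),
    Fin.card_filter_univ_eq_card_filter_Iio _ fun v => 0 < v ∧ stemParent c v = x,
    card_stemParent_preimage hc hb]
  split_ifs <;> omega

theorem card_stemTree_leaves (hc : 1 ≤ c) (hb : b ≤ c + 2) :
    #{x | (stemTree c b).degree x = 1} = 3 * c + 6 + b := by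
  rw [filter_congr (q := fun x : Fin _ => 2 * c + 2 ≤ (x : ℕ)) fun x _ => by
      rw [stemTree_degree hc hb]; split_ifs <;> omega,
    Fin.card_filter_univ_eq_card_filter_Iio _ (2 * c + 2 ≤ ·)]
  rw [show {v ∈ Iio (5 * c + 8 + b) | 2 * c + 2 ≤ v} = Ico (2 * c + 2) (5 * c + 8 + b) by
    ext; simp; omega, Nat.card_Ico]
  omega

theorem isStemTree_stemTree (hc : 1 ≤ c) (hb : b ≤ c + 2) : (stemTree c b).IsStemTree where
  isTree := parentGraph_isTree (fun _ => stemParent_lt) (by omega)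
  stem := by
    rintro v h2 ⟨u, hvu, hu⟩
    rw [stemTree_degree hc hb] at h2 hu ⊢
    rw [stemTree_adj] at hvu
    have hv : c ≤ (v : ℕ) ∧ (v : ℕ) < 2 * c + 2 := by
      unfold stemParent at hvu
      split_ifs at h2 hu hvu <;> omega
    refine ⟨by split_ifs <;> omega,
      card_eq_one.mpr ⟨⟨stemParent c v, (stemParent_lt (by omega)).trans v.2⟩, ?_⟩⟩
    ext w
    simp only [mem_filter, mem_univ, true_and, mem_singleton, Fin.ext_iff, stemTree_adj,
      stemTree_degree hc hb]
    unfold stemParent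
    split_ifs <;> omega
  nonstem := by
    intro v h2 hno
    rw [stemTree_degree hc hb] at h2 ⊢
    by_cases hvc : (v : ℕ) < c
    · rw [if_pos hvc]
    have hvs : (v : ℕ) < 2 * c + 2 := by split_ifs at h2 <;> omega
    refine absurd ⟨⟨2 * c + 2 + 3 * (v - c), by omega⟩,
      stemTree_adj.mpr (.inr ⟨by dsimp only; omega, ?_⟩), ?_⟩ hno
    · dsimp only [stemParent]
      split_ifs <;> omega
    · rw [stemTree_degree hc hb]
      dsimp only
      split_ifs <;> omega
end StemTree

/-- For any `n ≥ 9` there exists a tree with `n` pendent vertices in which each stem vertex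
(an internal vertex adjacent to a pendent vertex) has degree 4 or 5 and is adjacent to
exactly one internal vertex, and every non-stem internal vertex has degree 3; any such tree
satisfies `M₂(T) = 11n - 27`. -/
theorem stmt_15 (n : ℕ) (hn : 9 ≤ n) :
    (∃ (m : ℕ) (G : SimpleGraph (Fin m)),
      G.IsTree ∧ (Finset.univ.filter fun v => G.degree v = 1).card = n ∧
      (∀ v, 2 ≤ G.degree v → (∃ u, G.Adj v u ∧ G.degree u = 1) →
        (G.degree v = 4 ∨ G.degree v = 5) ∧
        (Finset.univ.filter fun u => G.Adj v u ∧ 2 ≤ G.degree u).card = 1) ∧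
      (∀ v, 2 ≤ G.degree v → ¬(∃ u, G.Adj v u ∧ G.degree u = 1) → G.degree v = 3)) ∧
    (∀ (V : Type) [Fintype V] [DecidableEq V] (G : SimpleGraph V) [DecidableRel G.Adj],
      G.IsTree → (Finset.univ.filter fun v => G.degree v = 1).card = n →
      (∀ v : V, 2 ≤ G.degree v → (∃ u, G.Adj v u ∧ G.degree u = 1) →
        (G.degree v = 4 ∨ G.degree v = 5) ∧
        (Finset.univ.filter fun u => G.Adj v u ∧ 2 ≤ G.degree u).card = 1) →
      (∀ v : V, 2 ≤ G.degree v → ¬(∃ u, G.Adj v u ∧ G.degree u = 1) → G.degree v = 3) →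
      ∑ e ∈ G.edgeFinset,
          Sym2.lift ⟨fun u v => (G.degree u : ℤ) * (G.degree v : ℤ),
            fun u v => mul_comm _ _⟩ e = 11 * (n : ℤ) - 27) := by
  refine ⟨?_, fun V _ _ G _ hT hL hstem hint => ?_⟩
  · obtain ⟨c, b, hc, hb, rfl⟩ : ∃ c b, 1 ≤ c ∧ b ≤ c + 2 ∧ n = 3 * c + 6 + b :=
      ⟨(n + 3) / 4 - 2, n - 3 * ((n + 3) / 4 - 2) - 6, by omega, by omega, by omega⟩
    have h := isStemTree_stemTree hc hb
    exact ⟨_, stemTree c b, h.isTree, card_stemTree_leaves hc hb, h.stem, h.nonstem⟩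
  · subst hL
    exact IsStemTree.secondZagrebIndex_eq ⟨hT, hstem, hint⟩ hn
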